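/- arXiv:1110.3465 — 3 statements merged into one kernel-verified Lean document; each statement's English description precedes it below -/
import Mathlib

section
/- Let p be an odd prime and let k ≥ 2 be an integer. Then the polynomial ∑_{m=0}^{kp−1} (m+1)·X^m, with coefficients reduced modulo p, is not irreducible in (ℤ/pℤ)[X]. -/
open Polynomial Finset

theorem stmt_7 (p : ℕ) (hp : p.Prime) (hodd : Odd p) (k : ℕ) (hk : 2 ≤ k) :
    ¬ Irreducible (∑ m ∈ Finset.range (k * p), C ((m + 1 : ℕ) : ZMod p) * X ^ m) := by
  haveI := Fact.mk hp
  have hp0 : p ≠ 0 := hp.ne_zero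
  have hp2 : 2 ≤ p := hp.two_le
  have hp3 : 3 ≤ p := by have := Nat.odd_iff.mp hodd; omega
  set A : (ZMod p)[X] := ∑ i ∈ Finset.range k, X ^ (i * p) with hA
  set B : (ZMod p)[X] := ∑ m ∈ Finset.range p, C ((m + 1 : ℕ) : ZMod p) * X ^ m with hB
  have key : (∑ m ∈ Finset.range (k * p), C ((m + 1 : ℕ) : ZMod p) * X ^ m) = A * B := by
    rw [hA, hB, Finset.sum_mul_sum]
    rw [← Finset.sum_product']
    refine Finset.sum_nbij' (fun n => (n / p, n % p)) (fun q => q.1 * p + q.2) ?_ ?_ ?_ ?_ ?_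
    · intro n hn
      simp only [Finset.mem_product, Finset.mem_range] at *
      exact ⟨Nat.div_lt_of_lt_mul (by linarith [hn]), Nat.mod_lt _ (Nat.pos_of_ne_zero hp0)⟩
    · intro q hq
      simp only [Finset.mem_product, Finset.mem_range] at *
      calc q.1 * p + q.2 < q.1 * p + p := by omega
        _ ≤ k * p := by nlinarith [hq.1, hq.2]
    · intro n hn; exact Nat.div_add_mod' n p
    · intro q hq
      simp only [Finset.mem_product, Finset.mem_range] at hq
      have h1 : (q.1 * p + q.2) / p = q.1 := by
        rw [Nat.add_comm, Nat.add_mul_div_right _ _ (Nat.pos_of_ne_zero hp0),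
          Nat.div_eq_of_lt hq.2, Nat.zero_add]
      have h2 : (q.1 * p + q.2) % p = q.2 := by
        rw [Nat.add_comm, Nat.add_mul_mod_self_right, Nat.mod_eq_of_lt hq.2]
      simp [h1, h2]
    · intro n hn
      have hc : ((n + 1 : ℕ) : ZMod p) = ((n % p + 1 : ℕ) : ZMod p) := by
        push_cast
        rw [ZMod.natCast_mod]
      simp only
      rw [hc, mul_comm (X ^ (n / p * p)), mul_assoc, ← pow_add, Nat.mod_add_div']
  rw [key]
  intro hirr
  rcases hirr.isUnit_or_isUnit rfl with h | h
  · have hd := Polynomial.natDegree_eq_zero_of_isUnit h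
    have hz : A.coeff p = 0 := by
      apply Polynomial.coeff_eq_zero_of_natDegree_lt
      omega
    rw [hA, Polynomial.finset_sum_coeff] at hz
    simp only [Polynomial.coeff_X_pow] at hz
    rw [Finset.sum_eq_single 1] at hz
    · simp at hz
    · intro b hb hb1
      rw [if_neg]
      intro heq
      exact hb1 (Nat.eq_of_mul_eq_mul_right (Nat.pos_of_ne_zero hp0)
        (by rw [← heq, one_mul]))
    · intro h1; exact absurd (Finset.mem_range.mpr (by omega)) h1
  · have hd := Polynomial.natDegree_eq_zero_of_isUnit h
    have hz : B.coeff 1 = 0 := by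
      apply Polynomial.coeff_eq_zero_of_natDegree_lt
      omega
    rw [hB, Polynomial.finset_sum_coeff] at hz
    simp only [Polynomial.coeff_C_mul, Polynomial.coeff_X_pow] at hz
    rw [Finset.sum_eq_single 1] at hz
    · simp at hz
      have h2 : ((2 : ℕ) : ZMod p) = 0 := by exact_mod_cast hz
      have := (ZMod.natCast_eq_zero_iff 2 p).mp h2
      have := Nat.le_of_dvd (by norm_num) this
      omega
    · intro b hb hb1
      simp [Ne.symm hb1]
    · intro h1; exact absurd (Finset.mem_range.mpr (by omega)) h1
end

section
/- Let p be an odd prime and let k ≥ 2 be an integer. Then the polynomial ∑_{m=0}^{kp−2} (m+1)·X^m, with coefficients reduced modulo p, is not irreducible in (ℤ/pℤ)[X]. -/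
open Polynomial Finset

theorem stmt_8 (p : ℕ) (hp : p.Prime) (hodd : Odd p) (k : ℕ) (hk : 2 ≤ k) :
    ¬ Irreducible (∑ m ∈ Finset.range (k * p - 1), C ((m + 1 : ℕ) : ZMod p) * X ^ m) := by
  have hp3 : 3 ≤ p := by
    have h2 := hp.two_le
    have := Nat.odd_iff.mp hodd
    omega
  haveI : Fact p.Prime := ⟨hp⟩
  set S : (ZMod p)[X] := ∑ m ∈ Finset.range (k * p - 1), C ((m + 1 : ℕ) : ZMod p) * X ^ m
    with hS
  set T : (ZMod p)[X] := ∑ i ∈ Finset.range k, X ^ (p * i) with hT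
  -- telescoping identity
  have key : ∀ n : ℕ, (1 - X : (ZMod p)[X]) ^ 2 *
      ∑ m ∈ Finset.range n, C ((m + 1 : ℕ) : ZMod p) * X ^ m
      = 1 - C ((n + 1 : ℕ) : ZMod p) * X ^ n + C ((n : ℕ) : ZMod p) * X ^ (n + 1) := by
    intro n
    induction n with
    | zero => simp
    | succ n ih =>
      rw [Finset.sum_range_succ, mul_add, ih]
      simp only [Nat.cast_add, Nat.cast_one, C_add, C_1]
      ring
  have hkp1 : 1 ≤ k * p := Nat.one_le_iff_ne_zero.mpr (Nat.mul_ne_zero (by omega) hp.pos.ne')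
  have h1 : (1 - X : (ZMod p)[X]) ^ 2 * S = 1 - X ^ (k * p) := by
    rw [hS, key (k * p - 1)]
    have e1 : k * p - 1 + 1 = k * p := by omega
    rw [e1]
    have e2 : ((k * p : ℕ) : ZMod p) = 0 := by
      simp [Nat.cast_mul, ZMod.natCast_self]
    have e3 : ((k * p - 1 : ℕ) : ZMod p) = -1 := by
      rw [Nat.cast_sub hkp1, e2]; simp
    rw [e2, e3]
    simp
    ring
  have h2 : (1 - X : (ZMod p)[X]) ^ p * T = 1 - X ^ (k * p) := by
    have hc : (1 - X : (ZMod p)[X]) ^ p = 1 - X ^ p := by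
      rw [sub_pow_char, one_pow]
    rw [hc, hT]
    have := geom_sum_mul (X ^ p : (ZMod p)[X]) k
    calc (1 - X ^ p : (ZMod p)[X]) * ∑ i ∈ Finset.range k, X ^ (p * i)
        = -((∑ i ∈ Finset.range k, (X ^ p : (ZMod p)[X]) ^ i) * (X ^ p - 1)) := by
          simp only [pow_mul]; ring
      _ = 1 - X ^ (k * p) := by rw [this]; rw [← pow_mul]; ring_nf
  have hXne : (1 - X : (ZMod p)[X]) ≠ 0 := by
    intro h
    have := congrArg (fun q => Polynomial.coeff q 1) h
    simp [Polynomial.coeff_one, Polynomial.coeff_X_one] at this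
  have hfact : S = (1 - X : (ZMod p)[X]) ^ (p - 2) * T := by
    have hpe : p = 2 + (p - 2) := by omega
    apply mul_left_cancel₀ (pow_ne_zero 2 hXne)
    rw [h1, ← mul_assoc, ← pow_add, ← hpe, h2]
  intro hirr
  rcases hirr.isUnit_or_isUnit hfact with h | h
  · have hdeg : ((1 - X : (ZMod p)[X]) ^ (p - 2)).natDegree = p - 2 := by
      rw [natDegree_pow]
      have : (1 - X : (ZMod p)[X]) = -(X - C 1) := by simp
      rw [this, natDegree_neg, natDegree_X_sub_C, mul_one]
    have := Polynomial.natDegree_eq_zero_of_isUnit h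
    omega
  · have h0 := Polynomial.natDegree_eq_zero_of_isUnit h
    have hTc : T = C (T.coeff 0) := Polynomial.eq_C_of_natDegree_eq_zero h0
    have hcoeff : T.coeff p = 1 := by
      rw [hT, Polynomial.finset_sum_coeff]
      rw [Finset.sum_eq_single 1]
      · simp
      · intro i hi hne
        rw [Polynomial.coeff_X_pow]
        have hpi : ¬ p = p * i := by
          intro hh
          have hpp := hp.pos
          rcases Nat.lt_or_ge i 1 with h' | h'
          · have : i = 0 := by omega
            subst this; simp at hh; omega
          · have h2i : 2 ≤ i := by omega
            nlinarith
        simp [hpi]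
      · intro h1; exact absurd (Finset.mem_range.mpr (by omega)) h1
    rw [hTc] at hcoeff
    rw [Polynomial.coeff_C] at hcoeff
    have : p ≠ 0 := hp.ne_zero
    simp [this] at hcoeff
end

section
/- Let n₀ be a natural number, and suppose that for every natural number n > n₀ there exists a prime q with q < √(2n) such that 2n − q is also prime. Then for every natural number m with m ≥ √(2n₀) + 1 there exists a prime p with m² < p < (m+1)². -/
/-! Take `2n = m(m+1) + 2`, which exceeds `2n₀`. Then `q² < 2n ≤ (m+1)²` forces `2 ≤ q ≤ m`, so the
prime `2n - q` lies in `[m² + 2, m² + m]`, strictly between `m²` and `(m+1)²`. -/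

theorem Nat.le_of_sq_lt_sq_add_self_add_two {q m : ℕ} (hm : 1 ≤ m) (h : q ^ 2 < m ^ 2 + m + 2) :
    q ≤ m := by
  by_contra! hqm
  nlinarith

theorem Nat.sq_add_self_add_two_sub_mem_Ioo {q m : ℕ} (hq : 2 ≤ q) (hqm : q ≤ m) :
    m ^ 2 + m + 2 - q ∈ Set.Ioo (m ^ 2) ((m + 1) ^ 2) := by
  rw [Set.mem_Ioo, add_sq]
  omega

theorem stmt_16 (n₀ : ℕ)
    (H : ∀ n : ℕ, n₀ < n → ∃ q : ℕ, q.Prime ∧ (q : ℝ) < Real.sqrt (2 * n) ∧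
        (2 * n - q).Prime)
    (m : ℕ) (hm : Real.sqrt (2 * n₀) + 1 ≤ (m : ℝ)) :
    ∃ p : ℕ, p.Prime ∧ m ^ 2 < p ∧ p < (m + 1) ^ 2 := by
  have hm_pos : 1 ≤ m := by
    exact_mod_cast (le_add_of_nonneg_left (Real.sqrt_nonneg _)).trans hm
  have hn₀ : 2 * n₀ < m ^ 2 := by
    exact_mod_cast Real.lt_sq_of_sqrt_lt (show √(2 * n₀ : ℝ) < m by linarith)
  obtain ⟨n, hn⟩ : Even (m ^ 2 + m + 2) := by
    simpa [sq, Nat.mul_succ, add_assoc] using (Nat.even_mul_succ_self m).add even_two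
  have h2n : 2 * n = m ^ 2 + m + 2 := by omega
  obtain ⟨q, hq, hq_lt, hp⟩ := H n (by omega)
  have hq_sq : q ^ 2 < 2 * n := by
    exact_mod_cast (Real.lt_sqrt (Nat.cast_nonneg q)).mp hq_lt
  have hqm : q ≤ m := Nat.le_of_sq_lt_sq_add_self_add_two hm_pos (h2n ▸ hq_sq)
  rw [h2n] at hp
  exact ⟨_, hp, Nat.sq_add_self_add_two_sub_mem_Ioo hq.two_le hqm⟩
end
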